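/- arXiv:2511.01978 — 3 statements merged into one kernel-verified Lean document; each statement's English description precedes it below -/
import Mathlib

section
/- In the chord-space model, left and right operators satisfy: for all i, j ∈ {0,1}, a_{L,i} ∘ a_{R,j} = a_{R,j} ∘ a_{L,i}, a†_{L,i} ∘ a†_{R,j} = a†_{R,j} ∘ a†_{L,i}, and a_{L,i} ∘ a†_{R,j} − a†_{R,j} ∘ a_{L,i} = δ_{ij}·W_i (and likewise a_{R,i} ∘ a†_{L,j} − a†_{L,j} ∘ a_{R,i} = δ_{ij}·W_i), where W_i is the diagonal operator W_i δ_w = Q(0,i)^{N₀(w)}·Q(1,i)^{N₁(w)}·δ_w. -/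
namespace DSSYK

/-- Binary strings (chord words); the letter `0` is `false`, the letter `1` is `true`. -/
abbrev Str : Type := List Bool

/-- The chord space: finitely supported complex functions on binary strings. -/
abbrev Sp : Type := Str →₀ ℂ

/-- Crossing weights: `Q 0 0 = q`, `Q 1 1 = q_m`, mixed crossings give `r`. -/
def Qmat (q qm r : ℝ) : Bool → Bool → ℂ
  | false, false => (q : ℂ)
  | true,  true  => (qm : ℂ)
  | _,     _     => (r : ℂ)

/-- Right creation `a†_{R,i}`: append the letter `i` on the right. -/
noncomputable def creR (i : Bool) : Sp →ₗ[ℂ] Sp :=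
  Finsupp.lift Sp ℂ Str fun w => Finsupp.single (w ++ [i]) 1

/-- Value of the right annihilation operator on a basis string: delete one letter
equal to `i`, weighted by the crossing factors with all letters to its right. -/
noncomputable def annVecR (Q : Bool → Bool → ℂ) (i : Bool) : Str → Sp
  | [] => 0
  | x :: t =>
      (if x = i then ((t.map (Q i)).prod) • Finsupp.single t (1 : ℂ) else 0)
        + Finsupp.mapDomain (List.cons x) (annVecR Q i t)

/-- Right annihilation `a_{R,i}`. -/
noncomputable def annR (Q : Bool → Bool → ℂ) (i : Bool) : Sp →ₗ[ℂ] Sp :=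
  Finsupp.lift Sp ℂ Str (annVecR Q i)

/-- Left creation `a†_{L,i}`: prepend the letter `i`. -/
noncomputable def creL (i : Bool) : Sp →ₗ[ℂ] Sp :=
  Finsupp.lift Sp ℂ Str fun w => Finsupp.single (i :: w) 1

/-- Value of the left annihilation operator on a basis string: delete one letter
equal to `i`, weighted by the crossing factors with all letters to its left. -/
noncomputable def annVecL (Q : Bool → Bool → ℂ) (i : Bool) : Str → Sp
  | [] => 0
  | x :: t =>
      (if x = i then Finsupp.single t (1 : ℂ) else 0)
        + Q i x • Finsupp.mapDomain (List.cons x) (annVecL Q i t)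

/-- Left annihilation `a_{L,i}`. -/
noncomputable def annL (Q : Bool → Bool → ℂ) (i : Bool) : Sp →ₗ[ℂ] Sp :=
  Finsupp.lift Sp ℂ Str (annVecL Q i)

/-- Diagonal weight operator `δ_w ↦ c₀^{N₀(w)} · c₁^{N₁(w)} · δ_w`, where `N₀, N₁`
count the `0`'s and `1`'s in `w`. -/
noncomputable def Wgen (c₀ c₁ : ℂ) : Sp →ₗ[ℂ] Sp :=
  Finsupp.lift Sp ℂ Str fun w =>
    Finsupp.single w (c₀ ^ (w.count false) * c₁ ^ (w.count true))

/-- The chord-counting weight operator `W δ_w = q^{N₀(w)} r^{N₁(w)} δ_w`. -/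
noncomputable def Wop (q r : ℝ) : Sp →ₗ[ℂ] Sp := Wgen (q : ℂ) (r : ℂ)

/-- Right boundary operators `H_{R,i} = a_{R,i} + a†_{R,i}`. -/
noncomputable def HR (Q : Bool → Bool → ℂ) (i : Bool) : Sp →ₗ[ℂ] Sp := annR Q i + creR i

/-- Left boundary operators `H_{L,i} = a_{L,i} + a†_{L,i}`. -/
noncomputable def HL (Q : Bool → Bool → ℂ) (i : Bool) : Sp →ₗ[ℂ] Sp := annL Q i + creL i

/-- The vacuum `ω = δ_{[]}` (the empty string). -/
noncomputable def vac : Sp := Finsupp.single [] 1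

/-- `ε v = v([])`, the coefficient of the empty string. -/
def eps (v : Sp) : ℂ := v []

end DSSYK

/-!
Every basis string is obtained from the vacuum by left creations, so each identity is proved by
induction along `a†_{L,x}`, using three exchange rules that come straight from the recursive
definitions: `a_{L,i} a†_{L,x} = δ_{xi} + Q(i,x) a†_{L,x} a_{L,i}`,
`a_{R,j} a†_{L,x} = a†_{L,x} a_{R,j} + δ_{xj} W_j` and `W_j a†_{L,x} = Q(j,x) a†_{L,x} W_j`,
where `W_j δ_w = ∏_s Q(j, w_s) δ_w`. The last rule gives `a_{L,i} W_j = Q(j,i) W_j a_{L,i}`, and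
this factor `Q(j,i)` is matched against `Q(i,j)` when the annihilators are commuted, which is
where the symmetry of `Q` enters.
-/

namespace DSSYK

open Finsupp

section Basis

variable (Q : Bool → Bool → ℂ)

theorem linearMap_ext_single {f g : Sp →ₗ[ℂ] Sp} (h : ∀ w, f (single w 1) = g (single w 1)) :
    f = g :=
  lhom_ext' fun w => LinearMap.ext_ring (h w)

@[simp] theorem creL_single (x : Bool) (w : Str) : creL x (single w 1) = single (x :: w) 1 := by
  simp [creL]

@[simp] theorem creR_single (j : Bool) (w : Str) : creR j (single w 1) = single (w ++ [j]) 1 := by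
  simp [creR]

@[simp] theorem annL_single (i : Bool) (w : Str) : annL Q i (single w 1) = annVecL Q i w := by
  simp [annL]

@[simp] theorem annR_single (i : Bool) (w : Str) : annR Q i (single w 1) = annVecR Q i w := by
  simp [annR]

theorem prod_map_eq_pow_count_mul_pow_count (f : Bool → ℂ) (w : Str) :
    (w.map f).prod = f false ^ w.count false * f true ^ w.count true := by
  induction w with
  | nil => simp
  | cons x t ih => cases x <;> simp [ih] <;> ring

theorem Wgen_single (f : Bool → ℂ) (w : Str) :
    Wgen (f false) (f true) (single w 1) = (w.map f).prod • single w 1 := by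
  simp [Wgen, prod_map_eq_pow_count_mul_pow_count]

theorem linearMap_ext_creL {f g : Sp →ₗ[ℂ] Sp} (hnil : f vac = g vac)
    (hcons : ∀ x t, f (single t 1) = g (single t 1) →
      f (creL x (single t 1)) = g (creL x (single t 1))) : f = g := by
  refine linearMap_ext_single fun w => ?_
  induction w with
  | nil => exact hnil
  | cons x t ih => simpa using hcons x t ih

theorem mapDomain_cons_eq_creL (x : Bool) (v : Sp) : mapDomain (List.cons x) v = creL x v := by
  rw [show creL x = lmapDomain ℂ ℂ (List.cons x) from
    linearMap_ext_single fun w => by simp, lmapDomain_apply]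

end Basis

section Cons

variable (Q : Bool → Bool → ℂ) (x : Bool) (v : Sp)

theorem annL_creL (i : Bool) :
    annL Q i (creL x v) = (if x = i then v else 0) + Q i x • creL x (annL Q i v) := by
  have h : annL Q i ∘ₗ creL x =
      (if x = i then LinearMap.id else 0) + Q i x • (creL x ∘ₗ annL Q i) :=
    linearMap_ext_single fun w => by split_ifs <;> simp [annVecL, mapDomain_cons_eq_creL, *]
  rw [← LinearMap.comp_apply, h]
  split_ifs <;> simp

theorem annR_creL (j : Bool) :
    annR Q j (creL x v) =
      (if x = j then Wgen (Q j false) (Q j true) v else 0) + creL x (annR Q j v) := by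
  have h : annR Q j ∘ₗ creL x =
      (if x = j then Wgen (Q j false) (Q j true) else 0) + creL x ∘ₗ annR Q j :=
    linearMap_ext_single fun w => by
      split_ifs <;> simp [annVecR, mapDomain_cons_eq_creL, Wgen_single, *]
  rw [← LinearMap.comp_apply, h]
  split_ifs <;> simp

theorem Wgen_creL (f : Bool → ℂ) :
    Wgen (f false) (f true) (creL x v) = f x • creL x (Wgen (f false) (f true) v) := by
  have h : Wgen (f false) (f true) ∘ₗ creL x = f x • (creL x ∘ₗ Wgen (f false) (f true)) :=
    linearMap_ext_single fun w => by
      simp only [LinearMap.comp_apply, LinearMap.smul_apply, creL_single, Wgen_single, map_smul,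
        List.map_cons, List.prod_cons, mul_smul]
  simpa using LinearMap.congr_fun h v

theorem annL_Wgen (i j : Bool) :
    annL Q i (Wgen (Q j false) (Q j true) v) =
      Q j i • Wgen (Q j false) (Q j true) (annL Q i v) := by
  have h : annL Q i ∘ₗ Wgen (Q j false) (Q j true) =
      Q j i • (Wgen (Q j false) (Q j true) ∘ₗ annL Q i) := by
    refine linearMap_ext_creL ?_ fun x t ih => ?_
    · simp [vac, Wgen_single, annVecL]
    · simp only [LinearMap.comp_apply, LinearMap.smul_apply] at ih ⊢
      rw [Wgen_creL, map_smul, annL_creL, annL_creL, ih]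
      simp only [map_add, map_smul, apply_ite, map_zero, Wgen_creL]
      split_ifs with hx
      · subst hx; module
      · module
  exact LinearMap.congr_fun h v

end Cons

section Relations

variable (Q : Bool → Bool → ℂ) (i j : Bool)

theorem creL_comp_creR : creL i ∘ₗ creR j = creR j ∘ₗ creL i :=
  linearMap_ext_single fun w => by simp

theorem creR_creL (v : Sp) : creR j (creL i v) = creL i (creR j v) :=
  (LinearMap.congr_fun (creL_comp_creR i j) v).symm

theorem annL_comp_annR (hij : Q i j = Q j i) :
    annL Q i ∘ₗ annR Q j = annR Q j ∘ₗ annL Q i := by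
  refine linearMap_ext_creL ?_ fun x t ih => ?_
  · simp [vac, annVecL, annVecR]
  · simp only [LinearMap.comp_apply] at ih ⊢
    rw [annR_creL, map_add, annL_creL, ih, annL_creL, map_add, map_smul, annR_creL]
    split_ifs with hxj hxi hxi
    · subst hxi hxj; rw [annL_Wgen]; module
    · subst hxj; rw [annL_Wgen, hij]; simp
    · simp
    · simp

theorem annL_comp_creR_sub_creR_comp_annL :
    annL Q i ∘ₗ creR j - creR j ∘ₗ annL Q i =
      if i = j then Wgen (Q i false) (Q i true) else 0 := by
  refine linearMap_ext_creL ?_ fun x t ih => ?_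
  · split_ifs with h <;> simp [vac, annVecL, Wgen_single, h, eq_comm]
  · simp only [LinearMap.sub_apply, LinearMap.comp_apply] at ih ⊢
    calc _ = Q i x • creL x
            (annL Q i (creR j (single t 1)) - creR j (annL Q i (single t 1))) := by
          rw [creR_creL, annL_creL, annL_creL, map_add, map_smul, creR_creL, map_sub, smul_sub,
            apply_ite (creR j), map_zero]
          split_ifs <;> abel
      _ = _ := by
          rw [ih]
          split_ifs with h
          · exact (Wgen_creL x _ (Q i)).symm
          · simp

theorem annR_comp_creL_sub_creL_comp_annR :
    annR Q i ∘ₗ creL j - creL j ∘ₗ annR Q i =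
      if i = j then Wgen (Q i false) (Q i true) else 0 := by
  refine LinearMap.ext fun v => ?_
  simp only [LinearMap.sub_apply, LinearMap.comp_apply, annR_creL, add_sub_cancel_right]
  rcases eq_or_ne i j with rfl | h
  · simp
  · simp [h, h.symm]

end Relations

theorem Qmat_comm (q qm r : ℝ) (a b : Bool) : Qmat q qm r a b = Qmat q qm r b a := by
  cases a <;> cases b <;> rfl

end DSSYK

open DSSYK in
/-- mutual (q-)commutation relations between left and right chord operators:
`[a_{L,i}, a_{R,j}] = 0`, `[a†_{L,i}, a†_{R,j}] = 0`, and
`[a_{L,i}, a†_{R,j}] = δ_{ij}·W_i = [a_{R,i}, a†_{L,j}]`, where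
`W_i δ_w = Q(0,i)^{N₀(w)} Q(1,i)^{N₁(w)} δ_w`. -/
theorem stmt_5 (q qm r : ℝ) (i j : Bool) :
    (annL (Qmat q qm r) i ∘ₗ annR (Qmat q qm r) j
      = annR (Qmat q qm r) j ∘ₗ annL (Qmat q qm r) i) ∧
    (creL i ∘ₗ creR j = creR j ∘ₗ creL i) ∧
    (annL (Qmat q qm r) i ∘ₗ creR j - creR j ∘ₗ annL (Qmat q qm r) i
      = if i = j then Wgen (Qmat q qm r false i) (Qmat q qm r true i) else 0) ∧
    (annR (Qmat q qm r) i ∘ₗ creL j - creL j ∘ₗ annR (Qmat q qm r) i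
      = if i = j then Wgen (Qmat q qm r false i) (Qmat q qm r true i) else 0) := by
  rw [Qmat_comm q qm r false i, Qmat_comm q qm r true i]
  exact ⟨annL_comp_annR _ i j (Qmat_comm q qm r i j), creL_comp_creR i j,
    annL_comp_creR_sub_creR_comp_annL _ i j, annR_comp_creL_sub_creL_comp_annR _ i j⟩
end

section
/- In the chord-space model with μ ∈ ℂ, define the deformed annihilation operators ã_{R,0} = a_{R,0} + μW and ã_{R,1} = a_{R,1}. Then they satisfy the same generalized q-deformed oscillator relations as the undeformed operators: for all i, j ∈ {0,1}, ã_{R,i} ∘ a†_{R,j} − Q(i,j)·(a†_{R,j} ∘ ã_{R,i}) = δ_{ij}·id as linear operators on V. -/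
namespace DSSYK

/-- The EoW-brane deformed annihilation operators:
`ã_{R,0} = a_{R,0} + μ·W`, `ã_{R,1} = a_{R,1}`. -/
noncomputable def annRdef (q qm r : ℝ) (μ : ℂ) (i : Bool) : Sp →ₗ[ℂ] Sp :=
  annR (Qmat q qm r) i + if i = false then μ • Wop q r else 0

end DSSYK

/-!
Appending a letter `j` and then deleting a letter `i` either deletes the appended letter
(possible only for `i = j`, with empty crossing weight) or deletes a letter of `w`, which now
crosses one more letter and so picks up an extra factor `Q(i,j)`:
`a_{R,i} δ_{w j} = δ_{ij} δ_w + Q(i,j) · a†_{R,j} a_{R,i} δ_w`.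
The weight operator `W` also `Q(0,j)`-commutes with `a†_{R,j}`, since appending `j` multiplies
the weight by `q = Q(0,0)` or `r = Q(0,1)`. Adding `μ W` to `a_{R,0}` therefore leaves the
`Q(0,j)`-commutator with `a†_{R,j}` unchanged.
-/

namespace DSSYK

section Commutator

variable {R M : Type*} [CommSemiring R] [AddCommGroup M] [Module R M]

theorem comp_sub_smul_comp_add_smul {A C T : M →ₗ[R] M} {c : R} (μ : R)
    (hT : T ∘ₗ C = c • (C ∘ₗ T)) :
    (A + μ • T) ∘ₗ C - c • (C ∘ₗ (A + μ • T)) = A ∘ₗ C - c • (C ∘ₗ A) := by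
  rw [LinearMap.add_comp, LinearMap.comp_add, LinearMap.smul_comp, LinearMap.comp_smul, hT,
    smul_comm μ c, smul_add]
  abel

end Commutator

theorem lift_single (f : Str → Sp) (w : Str) (c : ℂ) :
    Finsupp.lift Sp ℂ Str f (Finsupp.single w c) = c • f w := by
  simp [Finsupp.sum_single_index]

theorem creR_eq_lmapDomain (j : Bool) : creR j = Finsupp.lmapDomain ℂ ℂ (· ++ [j]) := by
  ext w : 2
  simp [creR]

theorem annVecR_append (Q : Bool → Bool → ℂ) (i j : Bool) (w : Str) :
    annVecR Q i (w ++ [j]) =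
      (if i = j then Finsupp.single w 1 else 0)
        + Q i j • Finsupp.mapDomain (· ++ [j]) (annVecR Q i w) := by
  induction w with
  | nil => simp [annVecR, eq_comm]
  | cons x t ih =>
    have hcomm : Finsupp.mapDomain (List.cons x) (Finsupp.mapDomain (· ++ [j]) (annVecR Q i t))
        = Finsupp.mapDomain (· ++ [j]) (Finsupp.mapDomain (List.cons x) (annVecR Q i t)) := by
      rw [← Finsupp.mapDomain_comp, ← Finsupp.mapDomain_comp]
      rfl
    rw [List.cons_append, annVecR, ih, annVecR, Finsupp.mapDomain_add, Finsupp.mapDomain_add,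
      Finsupp.mapDomain_smul, hcomm]
    split_ifs <;> simp only [Finsupp.mapDomain_single, List.map_append, List.map_singleton,
      List.prod_append, List.prod_singleton, Finsupp.mapDomain_zero, Finsupp.mapDomain_smul,
      zero_add] <;> module

theorem annR_comp_creR_sub (Q : Bool → Bool → ℂ) (i j : Bool) :
    annR Q i ∘ₗ creR j - Q i j • (creR j ∘ₗ annR Q i)
      = if i = j then (LinearMap.id : Sp →ₗ[ℂ] Sp) else 0 := by
  refine Finsupp.lhom_ext fun w c => ?_
  simp only [annR, creR_eq_lmapDomain, LinearMap.sub_apply, LinearMap.comp_apply,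
    LinearMap.smul_apply, Finsupp.lmapDomain_apply, Finsupp.mapDomain_single, lift_single,
    annVecR_append, Finsupp.mapDomain_smul]
  rw [← Finsupp.smul_single_one w c]
  split_ifs <;> simp only [LinearMap.id_apply, LinearMap.zero_apply] <;> module

theorem Wgen_comp_creR (c₀ c₁ : ℂ) (j : Bool) :
    Wgen c₀ c₁ ∘ₗ creR j = cond j c₁ c₀ • (creR j ∘ₗ Wgen c₀ c₁) := by
  refine Finsupp.lhom_ext fun w c => ?_
  simp only [Wgen, creR, LinearMap.comp_apply, LinearMap.smul_apply, lift_single,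
    Finsupp.smul_single, smul_eq_mul, List.count_append]
  congr 1
  cases j <;> simp <;> ring

end DSSYK

open DSSYK in
/-- the deformed annihilation operators satisfy the same generalized
q-deformed oscillator relations as the undeformed ones:
`ã_{R,i} ∘ a†_{R,j} − Q(i,j)·(a†_{R,j} ∘ ã_{R,i}) = δ_{ij}·id`. -/
theorem stmt_7 (q qm r : ℝ) (μ : ℂ) (i j : Bool) :
    annRdef q qm r μ i ∘ₗ creR j
        - Qmat q qm r i j • (creR j ∘ₗ annRdef q qm r μ i)
      = if i = j then (LinearMap.id : Sp →ₗ[ℂ] Sp) else 0 := by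
  cases i with
  | true => simpa [annRdef] using annR_comp_creR_sub (Qmat q qm r) true j
  | false =>
    have hW : Wop q r ∘ₗ creR j = Qmat q qm r false j • (creR j ∘ₗ Wop q r) := by
      cases j <;> exact Wgen_comp_creR _ _ _
    rw [annRdef, if_pos rfl, comp_sub_smul_comp_add_smul μ hW]
    exact annR_comp_creR_sub _ false j
end

section
/- General matter-brane screening: in the chord-space model with 0<q<1, r ∈ ℝ, an integer k ≥ 1, and nonzero complex α₁,…,α_k with |α_{i+1}|·|r|^i < |α₁| for 1 ≤ i ≤ k−1, the matter-brane states V_m^{(α_k,…,α₁)} satisfy, coordinatewise on binary strings, a_{R,0} V_m^{(α_k,…,α₁)} = [m]_q·V_{m−1}^{(α_k,…,α₁)} + α₁·r·q^m·V_m^{(α_k,…,α₁)} (for m = 0 the first term is absent since [0]_q = 0). Hence a right-boundary observer acting with a_{R,0}, a†_{R,0} cannot distinguish the k-matter brane state from a single EoW brane of effective tension μ = α₁·r: the k−1 additional matter chords are completely screened. -/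
namespace DSSYK

/-- The q-integer `[n]_q = (1 − qⁿ)/(1 − q)` (as a complex number). -/
noncomputable def qIntC (q : ℝ) (n : ℕ) : ℂ := (1 - (q : ℂ) ^ n) / (1 - (q : ℂ))

/-- The q-factorial `[n]!_q = Π_{j=1}^{n} [j]_q` (as a complex number). -/
noncomputable def qFactC (q : ℝ) (n : ℕ) : ℂ := ∏ j ∈ Finset.range n, qIntC q (j + 1)

/-- The q-Pochhammer symbol `(q;q)_n = Π_{j=0}^{n−1}(1 − q^{j+1})` (as a complex number). -/
noncomputable def qPochQC (q : ℝ) (n : ℕ) : ℂ := ∏ j ∈ Finset.range n, (1 - (q : ℂ) ^ (j + 1))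

/-- The infinite q-Pochhammer symbol `(x;q)_∞ = Π_{j=0}^{∞}(1 − x qʲ)`. -/
noncomputable def qPochInfC (q : ℝ) (x : ℂ) : ℂ := ∏' j : ℕ, (1 - x * (q : ℂ) ^ j)

end DSSYK

namespace DSSYK

/-- Coordinatewise (transpose) extension of an operator `T` on the chord space to
arbitrary coefficient functions on binary strings:
`(T f)(u) = Σ_w T_{u,w} f(w)`, where `T_{u,w}` is the coefficient of `δ_u` in `T δ_w`. -/
noncomputable def coordAct (T : Sp →ₗ[ℂ] Sp) (f : Str → ℂ) : Str → ℂ :=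
  fun u => ∑' w : Str, (T (Finsupp.single w 1)) u * f w

/-- The string `0^{n_k} 1 0^{n_{k−1}} 1 ⋯ 0^{n_1} 1 0^m` (recursion in `k`). -/
def braneString (ns : ℕ → ℕ) (m : ℕ) : ℕ → Str
  | 0 => List.replicate m false
  | k + 1 => List.replicate (ns (k + 1)) false ++ true :: braneString ns m k

/-- The coefficient of the `k`-matter brane state on the string with zero-block
lengths `n_k, …, n_1` (and final block `m`):
`(Π_{i=1}^{k} α_i^{n_i}/[n_i]!_q) · Π_{i=1}^{k−1} ((α_{i+1} rᶦ q^{n_1+⋯+n_i}/α₁; q)_∞)⁻¹`. -/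
noncomputable def braneCoeff (q r : ℝ) (α : ℕ → ℂ) (k : ℕ) (ns : ℕ → ℕ) : ℂ :=
  (∏ i ∈ Finset.Icc 1 k, α i ^ ns i / qFactC q (ns i)) *
    ∏ i ∈ Finset.Icc 1 (k - 1),
      (qPochInfC q
        (α (i + 1) * (r : ℂ) ^ i * (q : ℂ) ^ (∑ j ∈ Finset.Icc 1 i, ns j) / α 1))⁻¹

open Classical in
/-- The `k`-matter brane state `V_m^{(α_k,…,α₁)}`, as a coefficient function on binary
strings: supported on strings `0^{n_k} 1 0^{n_{k−1}} 1 ⋯ 0^{n_1} 1 0^m`, where it takes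
the value `braneCoeff`. -/
noncomputable def braneState (q r : ℝ) (α : ℕ → ℂ) (k m : ℕ) (w : Str) : ℂ :=
  if h : ∃ ns : ℕ → ℕ, w = braneString ns m k then braneCoeff q r α k h.choose else 0

end DSSYK

/-! The transpose of `a_{R,0}` inserts a `0` at every position of a string, weighted by `q` for
each `0` and `r` for each `1` to its right. On `0^{n_k} 1 ⋯ 0^{n_1} 1 0^t`, insertions into the
last block sum to `[t+1]_q` and produce the `[m]_q V_{m−1}` term. An insertion into the `i`-th
block raises `n_i` by one; by `(x;q)_∞ = (1 - x)(xq;q)_∞` this multiplies the coefficient of `V_m`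
by `α_i ∏_{j ≥ i} (1 - x_j)/[n_i+1]_q`, where `x_j = α_{j+1} rʲ q^{n_1+⋯+n_j}/α₁`. Since
`α_{j+1} r^{j+1} q^{n_1+⋯+n_j} = α₁ r x_j`, the sum over `i` telescopes to `α₁ r`. -/

namespace DSSYK

open Finset Function

section QNumbers

variable {q : ℝ}

lemma qIntC_zero : qIntC q 0 = 0 := by simp [qIntC]

lemma qIntC_succ (hq : (q : ℂ) ≠ 1) (n : ℕ) : qIntC q (n + 1) = qIntC q n + (q : ℂ) ^ n := by
  have : (1 : ℂ) - q ≠ 0 := sub_ne_zero.mpr hq.symm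
  simp only [qIntC]
  field_simp
  ring

lemma qIntC_ne_zero (hq : |q| < 1) {n : ℕ} (hn : n ≠ 0) : qIntC q n ≠ 0 := by
  have hpow : ‖(q : ℂ) ^ n‖ < 1 := by
    simpa [Complex.norm_real] using pow_lt_one₀ (abs_nonneg q) hq hn
  have hq1 : ‖(q : ℂ)‖ < 1 := by simpa [Complex.norm_real] using hq
  refine div_ne_zero (sub_ne_zero.mpr ?_) (sub_ne_zero.mpr ?_)
  · exact fun h => hpow.ne (by rw [← h, norm_one])
  · exact fun h => hq1.ne (by rw [← h, norm_one])

lemma qFactC_ne_zero (hq : |q| < 1) (n : ℕ) : qFactC q n ≠ 0 :=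
  prod_ne_zero_iff.mpr fun j _ => qIntC_ne_zero hq j.succ_ne_zero

lemma qIntC_succ_mul_pow_div_qFactC_succ (hq : |q| < 1) (a : ℂ) (n : ℕ) :
    qIntC q (n + 1) * (a ^ (n + 1) / qFactC q (n + 1)) = a * (a ^ n / qFactC q n) := by
  have h₁ := qFactC_ne_zero hq n
  have h₂ := qIntC_ne_zero hq n.succ_ne_zero
  rw [qFactC, prod_range_succ, ← qFactC]
  field_simp
  ring

theorem qPochInfC_eq_one_sub_mul (hq : |q| < 1) (x : ℂ) :
    qPochInfC q x = (1 - x) * qPochInfC q (x * q) := by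
  have htail : Multipliable fun j : ℕ => 1 - x * (q : ℂ) ^ (j + 1) := by
    have hsum : Summable fun j : ℕ => ‖-(x * q * (q : ℂ) ^ j)‖ := by
      refine ((summable_geometric_of_lt_one (abs_nonneg q) hq).mul_left (‖x‖ * |q|)).congr
        fun j => ?_
      rw [norm_neg, norm_mul, norm_mul, norm_pow, Complex.norm_real, Real.norm_eq_abs]
    refine (multipliable_one_add_of_summable hsum).congr fun j => ?_
    rw [pow_succ]
    ring
  unfold qPochInfC
  rw [tprod_eq_zero_mul' (f := fun j : ℕ => 1 - x * (q : ℂ) ^ j) htail, pow_zero, mul_one]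
  congr 1
  exact tprod_congr fun j => by rw [pow_succ]; ring

end QNumbers

theorem sum_mul_prod_one_sub_eq {R : Type*} [CommRing R] (a b : ℕ → R) {k : ℕ} (hk : 1 ≤ k)
    (h : ∀ j ∈ Ico 1 k, a (j + 1) = a 1 * b j) :
    ∑ i ∈ Icc 1 k, a i * ∏ j ∈ Ico i k, (1 - b j) = a 1 := by
  induction k, hk using Nat.le_induction with
  | base => simp
  | succ k hk ih =>
    have hsplit : ∀ i ∈ Icc 1 k, a i * ∏ j ∈ Ico i (k + 1), (1 - b j)
        = a i * (∏ j ∈ Ico i k, (1 - b j)) * (1 - b k) := fun i hi => by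
      rw [prod_Ico_succ_top (mem_Icc.mp hi).2, mul_assoc]
    rw [sum_Icc_succ_top (by omega), sum_congr rfl hsplit, ← sum_mul,
      ih fun j hj => h j (by simp at hj ⊢; omega), Ico_self, prod_empty,
      h k (by simp; omega)]
    ring

section BraneCoeff

variable {q r : ℝ} {α : ℕ → ℂ} {ns : ℕ → ℕ}

noncomputable def pochArg (q r : ℝ) (α : ℕ → ℂ) (ns : ℕ → ℕ) (j : ℕ) : ℂ :=
  α (j + 1) * (r : ℂ) ^ j * (q : ℂ) ^ (∑ l ∈ Icc 1 j, ns l) / α 1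

lemma braneCoeff_eq (k : ℕ) :
    braneCoeff q r α k ns = (∏ i ∈ Icc 1 k, α i ^ ns i / qFactC q (ns i)) *
      ∏ j ∈ Icc 1 (k - 1), (qPochInfC q (pochArg q r α ns j))⁻¹ := rfl

lemma pochArg_update_of_le {i j : ℕ} (hi : 1 ≤ i) (hij : i ≤ j) :
    pochArg q r α (update ns i (ns i + 1)) j = pochArg q r α ns j * q := by
  have hmem : i ∈ Icc 1 j := mem_Icc.mpr ⟨hi, hij⟩
  have hsum : ∑ l ∈ Icc 1 j, update ns i (ns i + 1) l = ∑ l ∈ Icc 1 j, ns l + 1 := by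
    rw [sum_update_of_mem hmem, sdiff_singleton_eq_erase, ← add_sum_erase _ _ hmem]
    ring
  rw [pochArg, pochArg, hsum, pow_succ]
  ring

lemma pochArg_update_of_lt {i j : ℕ} (hji : j < i) (v : ℕ) :
    pochArg q r α (update ns i v) j = pochArg q r α ns j := by
  refine congrArg (· / α 1) (congrArg _ (congrArg _ (sum_congr rfl fun l hl => ?_)))
  exact update_of_ne (by simp at hl; omega) _ _

lemma norm_pochArg_lt_one (hq : |q| ≤ 1) {j : ℕ} (h : ‖α (j + 1)‖ * |r| ^ j < ‖α 1‖) :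
    ‖pochArg q r α ns j‖ < 1 := by
  have hα1 : 0 < ‖α 1‖ := (mul_nonneg (norm_nonneg _) (by positivity)).trans_lt h
  rw [pochArg, norm_div, div_lt_one hα1]
  simp only [norm_mul, norm_pow, Complex.norm_real, Real.norm_eq_abs]
  calc ‖α (j + 1)‖ * |r| ^ j * |q| ^ _ ≤ ‖α (j + 1)‖ * |r| ^ j * 1 := by
        gcongr
        exact pow_le_one₀ (abs_nonneg q) hq
    _ < ‖α 1‖ := by rwa [mul_one]

lemma prod_pow_div_qFactC_update (hq : |q| < 1) {s : Finset ℕ} {i : ℕ} (hi : i ∈ s) :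
    qIntC q (ns i + 1) *
        ∏ l ∈ s, α l ^ update ns i (ns i + 1) l / qFactC q (update ns i (ns i + 1) l)
      = α i * ∏ l ∈ s, α l ^ ns l / qFactC q (ns l) := by
  rw [← mul_prod_erase _ _ hi, ← mul_prod_erase _ _ hi, update_self, ← mul_assoc,
    qIntC_succ_mul_pow_div_qFactC_succ hq, mul_assoc]
  congr 2
  exact prod_congr rfl fun l hl => by rw [update_of_ne (ne_of_mem_erase hl)]

lemma prod_inv_qPochInfC_update (hq : |q| < 1) {i k : ℕ} (hi : 1 ≤ i)
    (hx : ∀ j ∈ Ico i k, pochArg q r α ns j ≠ 1) :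
    ∏ j ∈ Icc 1 (k - 1), (qPochInfC q (pochArg q r α (update ns i (ns i + 1)) j))⁻¹
      = (∏ j ∈ Ico i k, (1 - pochArg q r α ns j)) *
          ∏ j ∈ Icc 1 (k - 1), (qPochInfC q (pochArg q r α ns j))⁻¹ := by
  have hfilter : (Icc 1 (k - 1)).filter (i ≤ ·) = Ico i k := by
    ext j; simp only [mem_filter, mem_Icc, mem_Ico]; omega
  rw [← hfilter, prod_filter, ← prod_mul_distrib]
  refine prod_congr rfl fun j hj => ?_
  split_ifs with hij
  · have hxj := hx j (by simp at hj ⊢; omega)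
    rw [pochArg_update_of_le hi hij, qPochInfC_eq_one_sub_mul hq (pochArg q r α ns j), mul_inv,
      ← mul_assoc, mul_inv_cancel₀ (sub_ne_zero.mpr hxj.symm), one_mul]
  · rw [pochArg_update_of_lt (by omega), one_mul]

lemma qIntC_mul_braneCoeff_update (hq : |q| < 1) {i k : ℕ} (hi : i ∈ Icc 1 k)
    (hx : ∀ j ∈ Ico i k, pochArg q r α ns j ≠ 1) :
    qIntC q (ns i + 1) * braneCoeff q r α k (update ns i (ns i + 1))
      = α i * (∏ j ∈ Ico i k, (1 - pochArg q r α ns j)) * braneCoeff q r α k ns := by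
  rw [braneCoeff_eq, braneCoeff_eq, prod_inv_qPochInfC_update hq (mem_Icc.mp hi).1 hx,
    ← mul_assoc, prod_pow_div_qFactC_update hq hi]
  ring

theorem sum_qIntC_mul_braneCoeff_update (hq : |q| < 1) {k : ℕ} (hk : 1 ≤ k) (hα1 : α 1 ≠ 0)
    (hx : ∀ j ∈ Ico 1 k, pochArg q r α ns j ≠ 1) :
    ∑ i ∈ Icc 1 k, qIntC q (ns i + 1) * (q : ℂ) ^ (∑ l ∈ Icc 1 (i - 1), ns l) * (r : ℂ) ^ i *
        braneCoeff q r α k (update ns i (ns i + 1))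
      = α 1 * r * braneCoeff q r α k ns := by
  set a : ℕ → ℂ := fun i => α i * (r : ℂ) ^ i * (q : ℂ) ^ (∑ l ∈ Icc 1 (i - 1), ns l)
  have hterm : ∀ i ∈ Icc 1 k,
      qIntC q (ns i + 1) * (q : ℂ) ^ (∑ l ∈ Icc 1 (i - 1), ns l) * (r : ℂ) ^ i *
          braneCoeff q r α k (update ns i (ns i + 1))
        = a i * (∏ j ∈ Ico i k, (1 - pochArg q r α ns j)) * braneCoeff q r α k ns := by
    intro i hi
    have := qIntC_mul_braneCoeff_update hq hi fun j hj => hx j (by simp at hi hj ⊢; omega)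
    linear_combination ((q : ℂ) ^ (∑ l ∈ Icc 1 (i - 1), ns l) * (r : ℂ) ^ i) * this
  have hrec : ∀ j ∈ Ico 1 k, a (j + 1) = a 1 * pochArg q r α ns j := by
    intro j _
    simp only [a, pochArg, Nat.add_sub_cancel, Nat.sub_self, Icc_eq_empty_of_lt zero_lt_one,
      sum_empty, pow_zero]
    field_simp
    ring
  rw [sum_congr rfl hterm, ← sum_mul, sum_mul_prod_one_sub_eq a _ hk hrec]
  simp [a]

end BraneCoeff

section Annihilation

variable (Q : Bool → Bool → ℂ) (i : Bool)

lemma mapDomain_cons_apply_nil {A M : Type*} [AddCommMonoid M] (x : A) (v : List A →₀ M) :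
    Finsupp.mapDomain (List.cons x) v [] = 0 :=
  Finsupp.mapDomain_of_notMem_range _ _ (by rintro ⟨a, ha⟩; simp at ha)

lemma mapDomain_cons_apply_cons {A M : Type*} [AddCommMonoid M] [DecidableEq A] (x y : A)
    (v : List A →₀ M) (s : List A) :
    Finsupp.mapDomain (List.cons x) v (y :: s) = if x = y then v s else 0 := by
  split_ifs with hxy
  · subst hxy
    exact Finsupp.mapDomain_apply List.cons_injective v s
  · exact Finsupp.mapDomain_of_notMem_range _ _ (by rintro ⟨a, ha⟩; simp_all)

lemma ite_smul_single_apply (x : Bool) (c : ℂ) (t u : Str) :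
    (if x = i then c • Finsupp.single t (1 : ℂ) else 0) u = if i = x ∧ u = t then c else 0 := by
  by_cases hx : x = i
  · subst hx
    rcases eq_or_ne u t with rfl | hut
    · simp
    · simp [hut]
  · simp [hx, Ne.symm hx]

lemma annVecR_apply (w u : Str) :
    annVecR Q i w u = ∑ j ∈ (range (u.length + 1)).filter (fun j => u.insertIdx j i = w),
      ((u.drop j).map (Q i)).prod := by
  induction w generalizing u with
  | nil =>
    refine (sum_eq_zero fun j hj => absurd (congrArg List.length (mem_filter.mp hj).2) ?_).symm
    rw [List.length_insertIdx_of_le_length (by simpa [Nat.lt_succ_iff] using (mem_filter.mp hj).1)]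
    simp
  | cons x t ih =>
    cases u with
    | nil =>
      rw [sum_filter]
      simp only [annVecR, Finsupp.add_apply, mapDomain_cons_apply_nil, add_zero,
        ite_smul_single_apply, List.length_nil, zero_add, sum_range_one, List.insertIdx_zero,
        List.drop_nil, List.map_nil, List.prod_nil, List.cons.injEq]
      split_ifs with h
      · rw [← h.2, List.map_nil, List.prod_nil]
      · rfl
    | cons y s =>
      rw [sum_filter, List.length_cons, sum_range_succ']
      simp only [annVecR, Finsupp.add_apply, ite_smul_single_apply, mapDomain_cons_apply_cons, ih,
        sum_filter, List.insertIdx_succ_cons, List.drop_succ_cons, List.insertIdx_zero,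
        List.drop_zero, List.cons.injEq]
      rw [add_comm]
      congr 1
      · by_cases hxy : x = y
        · subst hxy; simp
        · simp [hxy, Ne.symm hxy]
      · split_ifs with h
        · rw [h.2]
        · rfl

lemma coordAct_annR (f : Str → ℂ) (u : Str) :
    coordAct (annR Q i) f u
      = ∑ j ∈ range (u.length + 1), ((u.drop j).map (Q i)).prod * f (u.insertIdx j i) := by
  have hterm : ∀ w, annR Q i (Finsupp.single w 1) u * f w
      = ∑ j ∈ (range (u.length + 1)).filter (fun j => u.insertIdx j i = w),
          ((u.drop j).map (Q i)).prod * f (u.insertIdx j i) := by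
    intro w
    rw [annR, Finsupp.lift_apply, Finsupp.sum_single_index (by simp), one_smul,
      annVecR_apply, sum_mul]
    exact sum_congr rfl fun j hj => by rw [(mem_filter.mp hj).2]
  rw [coordAct, tsum_eq_sum (s := (range (u.length + 1)).image (u.insertIdx · i)) fun w hw => ?_]
  · rw [sum_congr rfl fun w _ => hterm w]
    exact sum_fiberwise_of_maps_to (fun j hj => mem_image_of_mem _ hj) _
  · refine (hterm w).trans (sum_eq_zero fun j hj => ?_)
    obtain ⟨hj_range, rfl⟩ := mem_filter.mp hj
    exact absurd (mem_image_of_mem _ hj_range) hw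

lemma coordAct_annR_nil (f : Str → ℂ) : coordAct (annR Q i) f [] = f [i] := by
  simp [coordAct_annR]

lemma coordAct_annR_cons (f : Str → ℂ) (x : Bool) (u : Str) :
    coordAct (annR Q i) f (x :: u)
      = ((x :: u).map (Q i)).prod * f (i :: x :: u)
        + coordAct (annR Q i) (fun w => f (x :: w)) u := by
  rw [coordAct_annR, coordAct_annR, List.length_cons, sum_range_succ', add_comm]
  simp only [List.drop_succ_cons, List.insertIdx_succ_cons, List.drop_zero, List.insertIdx_zero]

end Annihilation

section BraneString

lemma braneString_update_of_lt (ns : ℕ → ℕ) (t : ℕ) {i k : ℕ} (h : k < i) (v : ℕ) :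
    braneString (update ns i v) t k = braneString ns t k := by
  induction k with
  | zero => rfl
  | succ k ih => simp only [braneString, update_of_ne (by omega : k + 1 ≠ i), ih (by omega)]

lemma count_true_braneString (ns : ℕ → ℕ) (t k : ℕ) : (braneString ns t k).count true = k := by
  induction k with
  | zero => simp [braneString, List.count_replicate]
  | succ k ih => simp [braneString, List.count_replicate, ih]

lemma exists_braneString_eq (u : Str) : ∃ ns t k, braneString ns t k = u := by
  induction u with
  | nil => exact ⟨0, 0, 0, rfl⟩
  | cons x u ih =>
    obtain ⟨ns, t, k, rfl⟩ := ih
    cases x with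
    | true =>
      refine ⟨update ns (k + 1) 0, t, k + 1, ?_⟩
      simp [braneString, braneString_update_of_lt]
    | false =>
      cases k with
      | zero => exact ⟨ns, t + 1, 0, by simp [braneString, List.replicate_succ]⟩
      | succ k =>
        refine ⟨update ns (k + 1) (ns (k + 1) + 1), t, k + 1, ?_⟩
        simp [braneString, braneString_update_of_lt, List.replicate_succ]

lemma replicate_false_append_true_inj {a a' : ℕ} {v v' : Str}
    (h : List.replicate a false ++ true :: v = List.replicate a' false ++ true :: v') :
    a = a' ∧ v = v' := by
  induction a generalizing a' with
  | zero => cases a' <;> simp_all [List.replicate_succ]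
  | succ a ih =>
    cases a' with
    | zero => simp [List.replicate_succ] at h
    | succ a' =>
      simp only [List.replicate_succ, List.cons_append, List.cons.injEq, true_and] at h
      exact (ih h).imp (congrArg (· + 1)) id

lemma braneString_inj {ns ns' : ℕ → ℕ} {t t' k : ℕ}
    (h : braneString ns t k = braneString ns' t' k) :
    t = t' ∧ ∀ i ∈ Icc 1 k, ns i = ns' i := by
  induction k with
  | zero => simpa [braneString] using congrArg List.length h
  | succ k ih =>
    obtain ⟨hk, hrest⟩ := replicate_false_append_true_inj h
    obtain ⟨ht, hns⟩ := ih hrest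
    refine ⟨ht, fun i hi => ?_⟩
    rcases eq_or_lt_of_le (mem_Icc.mp hi).2 with rfl | hlt
    · exact hk
    · exact hns i (mem_Icc.mpr ⟨(mem_Icc.mp hi).1, by omega⟩)

end BraneString

section BraneState

variable {q r : ℝ} {α : ℕ → ℂ}

lemma braneCoeff_congr {k : ℕ} {ns ns' : ℕ → ℕ} (h : ∀ i ∈ Icc 1 k, ns i = ns' i) :
    braneCoeff q r α k ns = braneCoeff q r α k ns' := by
  rw [braneCoeff_eq, braneCoeff_eq]
  congr 1
  · exact prod_congr rfl fun i hi => by rw [h i hi]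
  · refine prod_congr rfl fun j hj => ?_
    rw [pochArg, pochArg, sum_congr rfl fun l hl => h l (by simp at hj hl ⊢; omega)]

lemma braneState_braneString (k m : ℕ) (ns : ℕ → ℕ) (t : ℕ) :
    braneState q r α k m (braneString ns t k) = if t = m then braneCoeff q r α k ns else 0 := by
  unfold braneState
  split_ifs with hex htm htm
  · subst htm
    exact braneCoeff_congr (braneString_inj hex.choose_spec).2 |>.symm
  · exact absurd (braneString_inj hex.choose_spec).1 htm
  · exact absurd ⟨ns, by rw [htm]⟩ hex
  · rfl

lemma braneState_braneString_of_ne {k c : ℕ} (hc : c ≠ k) (m : ℕ) (ns : ℕ → ℕ) (t : ℕ) :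
    braneState q r α k m (braneString ns t c) = 0 := by
  refine dif_neg fun ⟨ns', h⟩ => hc ?_
  simpa [count_true_braneString] using congrArg (List.count true) h

end BraneState

section Expansion

variable {q : ℝ} (qm r : ℝ)

lemma prod_map_Qmat_braneString (ns : ℕ → ℕ) (t k : ℕ) :
    ((braneString ns t k).map (Qmat q qm r false)).prod
      = (q : ℂ) ^ (∑ j ∈ Icc 1 k, ns j + t) * (r : ℂ) ^ k := by
  induction k with
  | zero => simp [braneString, List.map_replicate, Qmat]
  | succ k ih =>
    simp only [braneString, List.map_append, List.map_replicate, List.map_cons, List.prod_append,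
      List.prod_replicate, List.prod_cons, ih, sum_Icc_succ_top (by omega : 1 ≤ k + 1)]
    simp only [Qmat]
    ring

lemma coordAct_annR_replicate (hq : (q : ℂ) ≠ 1) (f : Str → ℂ) (t : ℕ) :
    coordAct (annR (Qmat q qm r) false) f (List.replicate t false)
      = qIntC q (t + 1) * f (List.replicate (t + 1) false) := by
  induction t generalizing f with
  | zero => simp [coordAct_annR_nil, qIntC_succ hq, qIntC_zero]
  | succ t ih =>
    rw [List.replicate_succ, coordAct_annR_cons, ih, qIntC_succ hq (t + 1)]
    simp only [List.map_replicate, List.prod_replicate, Qmat, ← List.replicate_succ]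
    ring

lemma coordAct_annR_replicate_append_true (hq : (q : ℂ) ≠ 1) (f : Str → ℂ) (n : ℕ) (v : Str) :
    coordAct (annR (Qmat q qm r) false) f (List.replicate n false ++ true :: v)
      = qIntC q (n + 1) * r * (v.map (Qmat q qm r false)).prod *
          f (List.replicate (n + 1) false ++ true :: v)
        + coordAct (annR (Qmat q qm r) false)
            (fun w => f (List.replicate n false ++ true :: w)) v := by
  induction n generalizing f with
  | zero =>
    simp [coordAct_annR_cons, qIntC_succ hq, qIntC_zero, Qmat]
  | succ n ih =>
    rw [List.replicate_succ, List.cons_append, coordAct_annR_cons, ih, qIntC_succ hq (n + 1)]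
    simp only [List.map_cons, List.map_append, List.map_replicate, List.prod_cons,
      List.prod_append, List.prod_replicate, Qmat, ← List.cons_append, ← List.replicate_succ]
    ring

theorem coordAct_annR_braneString (hq : (q : ℂ) ≠ 1) (f : Str → ℂ) (ns : ℕ → ℕ) (t k : ℕ) :
    coordAct (annR (Qmat q qm r) false) f (braneString ns t k)
      = (q : ℂ) ^ t * ∑ i ∈ Icc 1 k, qIntC q (ns i + 1) * (q : ℂ) ^ (∑ l ∈ Icc 1 (i - 1), ns l) *
            (r : ℂ) ^ i * f (braneString (update ns i (ns i + 1)) t k)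
        + qIntC q (t + 1) * f (braneString ns (t + 1) k) := by
  induction k generalizing f with
  | zero => simp [braneString, coordAct_annR_replicate qm r hq]
  | succ k ih =>
    have hlower : ∀ i ∈ Icc 1 k, List.replicate (ns (k + 1)) false ++ true ::
        braneString (update ns i (ns i + 1)) t k = braneString (update ns i (ns i + 1)) t (k + 1) :=
      fun i hi => by simp [braneString, update_of_ne (by simp at hi; omega : k + 1 ≠ i)]
    have htop : List.replicate (ns (k + 1) + 1) false ++ true :: braneString ns t k
        = braneString (update ns (k + 1) (ns (k + 1) + 1)) t (k + 1) := by
      simp [braneString, braneString_update_of_lt]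
    rw [braneString, coordAct_annR_replicate_append_true qm r hq, ih, sum_congr rfl fun i hi => by
      rw [hlower i hi], htop, sum_Icc_succ_top (by omega), prod_map_Qmat_braneString,
      Nat.add_sub_cancel]
    simp only [braneString]
    ring

end Expansion

end DSSYK

open DSSYK in
/-- general matter-brane screening.  Under the stated conditions on
`q, r, k, α₁,…,α_k`, the matter-brane states satisfy, coordinatewise on binary strings,
`a_{R,0} V_m = [m]_q·V_{m−1} + α₁·r·q^m·V_m`, so a right-boundary observer acting with
`a_{R,0}, a†_{R,0}` sees a single EoW brane of effective tension `μ = α₁·r`. -/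
theorem stmt_13 (q qm r : ℝ) (hq0 : 0 < q) (hq1 : q < 1)
    (k : ℕ) (hk : 1 ≤ k) (α : ℕ → ℂ)
    (hα : ∀ i ∈ Finset.Icc 1 k, α i ≠ 0)
    (hscreen : ∀ i : ℕ, 1 ≤ i → i ≤ k - 1 →
      ‖α (i + 1)‖ * |r| ^ i < ‖α 1‖) :
    ∀ (m : ℕ) (w : Str),
      coordAct (annR (Qmat q qm r) false) (braneState q r α k m) w
        = qIntC q m * braneState q r α k (m - 1) w
          + α 1 * (r : ℂ) * (q : ℂ) ^ m * braneState q r α k m w := by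
  intro m w
  have hq : |q| < 1 := abs_lt.mpr ⟨by linarith, hq1⟩
  have hq_ne : (q : ℂ) ≠ 1 := by exact_mod_cast hq1.ne
  obtain ⟨ns, t, c, rfl⟩ := exists_braneString_eq w
  rw [coordAct_annR_braneString qm r hq_ne]
  rcases ne_or_eq c k with hc | rfl
  · simp [braneState_braneString_of_ne hc]
  simp only [braneState_braneString]
  rcases eq_or_ne t m with rfl | htm
  · have hx : ∀ j ∈ Finset.Ico 1 c, pochArg q r α ns j ≠ 1 := fun j hj =>
      ne_of_apply_ne norm <| by
        simpa using (norm_pochArg_lt_one hq.le (hscreen j (by simp at hj; omega)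
          (by simp at hj; omega))).ne
    have hα1 : α 1 ≠ 0 := hα 1 (Finset.mem_Icc.mpr ⟨le_rfl, hk⟩)
    simp only [if_true, if_neg (Nat.succ_ne_self t), mul_zero, add_zero,
      sum_qIntC_mul_braneCoeff_update hq hk hα1 hx]
    rcases Nat.eq_zero_or_pos t with rfl | ht
    · simp [qIntC_zero]
    · simp [show t ≠ t - 1 by omega]
      ring
  · simp only [htm, if_false, mul_zero, Finset.sum_const_zero, add_zero, zero_add]
    rcases eq_or_ne (t + 1) m with rfl | hsucc
    · simp
    · simp [hsucc, show t ≠ m - 1 by omega]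
end
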